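/- Let L ∈ ℝ^{2n×2} have full column rank and let D̂ = [[ĉ, f̂],[0, ĉ⁻¹]] be the optimal scaling with ĉ = ‖L₂‖₂/(det(LᵀL))^{1/4} and f̂ = −(L₁ᵀL₂)/(‖L₂‖₂ (det(LᵀL))^{1/4}). Then the squared Frobenius norm of D̂ satisfies ‖D̂‖_F² = ‖L‖_F² / √(det(LᵀL)). -/

import Mathlib

open Matrix

noncomputable def enorm' {m : ℕ} (v : Fin m → ℝ) : ℝ := Real.sqrt (∑ i, v i ^ 2)

noncomputable def frob {m n : ℕ} (A : Matrix (Fin m) (Fin n) ℝ) : ℝ :=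
  Real.sqrt (∑ i, ∑ j, A i j ^ 2)

noncomputable def specNorm {m n : ℕ} (A : Matrix (Fin m) (Fin n) ℝ) : ℝ :=
  ‖(Matrix.toEuclideanLin A).toContinuousLinearMap‖

noncomputable def sigmaMax (B : Matrix (Fin 2) (Fin 2) ℝ) : ℝ :=
  Real.sqrt (max ((Matrix.isHermitian_iff_isSymm.mpr (Matrix.isSymm_transpose_mul_self B)).eigenvalues 0)
                 ((Matrix.isHermitian_iff_isSymm.mpr (Matrix.isSymm_transpose_mul_self B)).eigenvalues 1))

noncomputable def sigmaMin (B : Matrix (Fin 2) (Fin 2) ℝ) : ℝ :=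
  Real.sqrt (min ((Matrix.isHermitian_iff_isSymm.mpr (Matrix.isSymm_transpose_mul_self B)).eigenvalues 0)
                 ((Matrix.isHermitian_iff_isSymm.mpr (Matrix.isSymm_transpose_mul_self B)).eigenvalues 1))

/-!
With `a = ‖L₁‖²`, `b = ‖L₂‖²`, `s = L₁ᵀL₂` and `δ = √(det LᵀL)`, the Gram determinant is
`δ² = ab - s²`, so `ĉ² + f̂² + ĉ⁻² = (b² + s² + δ²) / (bδ) = (a + b) / δ`.
-/

lemma frob_sq {m n : ℕ} (A : Matrix (Fin m) (Fin n) ℝ) : frob A ^ 2 = ∑ i, ∑ j, A i j ^ 2 :=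
  Real.sq_sqrt (Finset.sum_nonneg fun i _ => Finset.sum_nonneg fun j _ => sq_nonneg (A i j))

lemma frob_sq_of_fin_two_cols {m : ℕ} (L : Matrix (Fin m) (Fin 2) ℝ) :
    frob L ^ 2 = ∑ i, L i 0 ^ 2 + ∑ i, L i 1 ^ 2 := by
  simp [frob_sq, Fin.sum_univ_two, Finset.sum_add_distrib]

lemma frob_sq_upper_triangular_fin_two (x y z : ℝ) :
    frob !![x, y; 0, z] ^ 2 = x ^ 2 + y ^ 2 + z ^ 2 := by
  simp [frob_sq, Fin.sum_univ_two]

lemma det_transpose_mul_self_fin_two {m : ℕ} (L : Matrix (Fin m) (Fin 2) ℝ) :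
    (Lᵀ * L).det = (∑ i, L i 0 ^ 2) * (∑ i, L i 1 ^ 2) - (∑ i, L i 0 * L i 1) ^ 2 := by
  simp only [det_fin_two, mul_apply, transpose_apply, sq]
  simp only [mul_comm (L _ 1) (L _ 0)]

/-- The case `δ = 0` holds only through the junk values `x / 0 = 0` and `0⁻¹ = 0`. -/
lemma scaling_sq_sum_eq {a b s δ : ℝ} (hb : 0 ≤ b) (hδ : δ = √(a * b - s ^ 2)) :
    (√b / √δ) ^ 2 + (-s / (√b * √δ)) ^ 2 + (√b / √δ)⁻¹ ^ 2 = (a + b) / δ := by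
  obtain hδ0 | hδpos := (hδ ▸ Real.sqrt_nonneg _ : 0 ≤ δ).eq_or_lt
  · simp [← hδ0]
  have hgram : δ ^ 2 = a * b - s ^ 2 := by
    rw [hδ, Real.sq_sqrt (Real.sqrt_pos.mp (hδ ▸ hδpos)).le]
  have hbpos : 0 < b := by
    refine hb.lt_of_ne fun hb0 => ?_
    subst hb0
    nlinarith [sq_nonneg s, mul_pos hδpos hδpos]
  rw [div_pow, div_pow, inv_pow, div_pow, mul_pow, neg_sq, Real.sq_sqrt hb,
    Real.sq_sqrt hδpos.le]
  field_simp
  linear_combination hgram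

theorem frob_sq_of_optimal_scaling_general {n : ℕ} (L : Matrix (Fin (2*n)) (Fin 2) ℝ)
    (cop fop : ℝ)
    (hc : cop = enorm' (fun i => L i 1) / Real.sqrt (Real.sqrt (Lᵀ * L).det))
    (hf : fop = -(∑ i, L i 0 * L i 1) /
        (enorm' (fun i => L i 1) * Real.sqrt (Real.sqrt (Lᵀ * L).det))) :
    frob (!![cop, fop; 0, cop⁻¹] : Matrix (Fin 2) (Fin 2) ℝ) ^ 2 =
      frob L ^ 2 / Real.sqrt (Lᵀ * L).det := by
  rw [frob_sq_upper_triangular_fin_two, frob_sq_of_fin_two_cols, hc, hf, enorm']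
  exact scaling_sq_sum_eq (Finset.sum_nonneg fun i _ => sq_nonneg _)
    (by rw [det_transpose_mul_self_fin_two])

theorem frob_sq_of_optimal_scaling {n : ℕ} (L : Matrix (Fin (2*n)) (Fin 2) ℝ)
    (hLI : LinearIndependent ℝ ![fun i => L i 0, fun i => L i 1])
    (cop fop : ℝ)
    (hc : cop = enorm' (fun i => L i 1) / Real.sqrt (Real.sqrt (Lᵀ * L).det))
    (hf : fop = -(∑ i, L i 0 * L i 1) /
        (enorm' (fun i => L i 1) * Real.sqrt (Real.sqrt (Lᵀ * L).det))) :
    frob (!![cop, fop; 0, cop⁻¹] : Matrix (Fin 2) (Fin 2) ℝ) ^ 2 =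
      frob L ^ 2 / Real.sqrt (Lᵀ * L).det :=
  frob_sq_of_optimal_scaling_general L cop fop hc hf
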